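/- Let X be a Banach space, p ∈ [1, ∞), and let J : (0, ∞) → B(X) be a family of bounded linear operators such that M := R_p({s·J(s) : s > 0}) < ∞. Let η > 0 satisfy (π/2)·η·M < 1. Then for every λ ∈ ℂ with s := Re λ > 0 and |Im λ| < η·s, the operator I + (λ − s)·J(s) is invertible in B(X), and the family {λ · J(Re λ) · (I + (λ − Re λ)·J(Re λ))^{−1} : Re λ > 0, |Im λ| < η·Re λ} is R-bounded. (This is the assertion, used to show that the R-angle of an R-sectorial operator is positive, that R-boundedness of the resolvents s(s + A)^{−1} on the positive half-line extends to a complex sector around it.) -/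

import Mathlib

open scoped BigOperators

noncomputable section

/-- The discrete Rademacher average `(2^{-N} ∑_{ε ∈ {−1,1}^N} ‖∑_ν ε_ν v_ν‖^p)^{1/p}`. -/
def radAvg {Y : Type*} [NormedAddCommGroup Y] (p : ℝ) {N : ℕ} (v : Fin N → Y) : ℝ :=
  (((2 : ℝ) ^ N)⁻¹ * ∑ ε : Fin N → Bool, ‖∑ ν, (if ε ν then v ν else -v ν)‖ ^ p) ^ p⁻¹

/-- A family `T` of bounded operators is R-bounded with `R_p`-bound at most `C`. -/
def IsRBoundedWith {X Y : Type*} [NormedAddCommGroup X] [NormedSpace ℂ X]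
    [NormedAddCommGroup Y] [NormedSpace ℂ Y]
    (p : ℝ) (T : Set (X →L[ℂ] Y)) (C : ℝ) : Prop :=
  ∀ (N : ℕ) (t : Fin N → X →L[ℂ] Y), (∀ ν, t ν ∈ T) → ∀ x : Fin N → X,
    radAvg p (fun ν => t ν (x ν)) ≤ C * radAvg p x

/-- A family of bounded operators is R-bounded. -/
def IsRBounded {X Y : Type*} [NormedAddCommGroup X] [NormedSpace ℂ X]
    [NormedAddCommGroup Y] [NormedSpace ℂ Y] (p : ℝ) (T : Set (X →L[ℂ] Y)) : Prop :=
  ∃ C, 0 ≤ C ∧ IsRBoundedWith p T C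

/-- The `R_p`-bound of a family of bounded operators. -/
def rBound {X Y : Type*} [NormedAddCommGroup X] [NormedSpace ℂ X]
    [NormedAddCommGroup Y] [NormedSpace ℂ Y] (p : ℝ) (T : Set (X →L[ℂ] Y)) : ℝ :=
  sInf {C | 0 ≤ C ∧ IsRBoundedWith p T C}

/-! ### Auxiliary lemmas about `radAvg` -/

section RadAvgAux

set_option linter.unusedSectionVars false

variable {X : Type*} [NormedAddCommGroup X] [NormedSpace ℂ X] {p : ℝ} {N : ℕ}

lemma radAvg_eq_norm (hp : 1 ≤ p) (v : Fin N → X) :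
    radAvg p v = (((2:ℝ)^N)⁻¹) ^ p⁻¹ *
      ‖(WithLp.equiv (ENNReal.ofReal p) ((Fin N → Bool) → X)).symm
        (fun ε => ∑ ν, (if ε ν then v ν else -v ν))‖ := by
  haveI : Fact (1 ≤ ENNReal.ofReal p) := ⟨ENNReal.one_le_ofReal.mpr hp⟩
  have hp0 : (0:ℝ) < p := lt_of_lt_of_le one_pos hp
  have htr : (ENNReal.ofReal p).toReal = p := ENNReal.toReal_ofReal hp0.le
  rw [PiLp.norm_eq_sum (by rw [htr]; exact hp0)]
  simp only [htr, WithLp.equiv_symm_apply, PiLp.toLp_apply, one_div]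
  rw [radAvg, Real.mul_rpow (by positivity) (by positivity)]

lemma radAvg_nonneg (v : Fin N → X) : 0 ≤ radAvg p v := by
  apply Real.rpow_nonneg; positivity

lemma radAvg_add_le (hp : 1 ≤ p) (v w : Fin N → X) :
    radAvg p (fun ν => v ν + w ν) ≤ radAvg p v + radAvg p w := by
  haveI : Fact (1 ≤ ENNReal.ofReal p) := ⟨ENNReal.one_le_ofReal.mpr hp⟩
  rw [radAvg_eq_norm hp, radAvg_eq_norm hp, radAvg_eq_norm hp, ← mul_add]
  refine mul_le_mul_of_nonneg_left ?_ (by positivity)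
  have h : (fun ε : Fin N → Bool => ∑ ν, (if ε ν then v ν + w ν else -(v ν + w ν)))
      = (fun ε : Fin N → Bool => ∑ ν, (if ε ν then v ν else -v ν))
        + fun ε => ∑ ν, (if ε ν then w ν else -w ν) := by
    funext ε
    show _ = (∑ ν, (if ε ν then v ν else -v ν)) + ∑ ν, (if ε ν then w ν else -w ν)
    rw [← Finset.sum_add_distrib]
    refine Finset.sum_congr rfl fun ν _ => ?_
    cases hb : ε ν <;> simp [neg_add] <;> abel
  rw [h, WithLp.equiv_symm_apply, WithLp.toLp_add]
  exact norm_add_le _ _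

lemma radAvg_smul (hp : 1 ≤ p) (z : ℂ) (v : Fin N → X) :
    radAvg p (fun ν => z • v ν) = ‖z‖ * radAvg p v := by
  haveI : Fact (1 ≤ ENNReal.ofReal p) := ⟨ENNReal.one_le_ofReal.mpr hp⟩
  rw [radAvg_eq_norm hp, radAvg_eq_norm hp]
  have h : (fun ε : Fin N → Bool => ∑ ν, (if ε ν then z • v ν else -(z • v ν)))
      = z • fun ε : Fin N → Bool => ∑ ν, (if ε ν then v ν else -v ν) := by
    funext ε
    show _ = z • ∑ ν, (if ε ν then v ν else -v ν)
    rw [Finset.smul_sum]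
    refine Finset.sum_congr rfl fun ν _ => ?_
    cases hb : ε ν <;> simp
  rw [h, WithLp.equiv_symm_apply, WithLp.toLp_smul, norm_smul]
  ring

lemma radAvg_zero (hp : 1 ≤ p) :
    radAvg p (fun _ : Fin N => (0 : X)) = 0 := by
  have h := radAvg_smul (X := X) (N := N) hp 0 (fun _ => 0)
  simpa using h

lemma radAvg_sum_le (hp : 1 ≤ p) {m : ℕ} (f : ℕ → Fin N → X) :
    radAvg p (fun ν => ∑ n ∈ Finset.range m, f n ν)
      ≤ ∑ n ∈ Finset.range m, radAvg p (f n) := by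
  induction m with
  | zero => simp [radAvg_zero (X := X) hp]
  | succ m ih =>
      rw [Finset.sum_range_succ]
      calc radAvg p (fun ν => ∑ n ∈ Finset.range (m+1), f n ν)
          = radAvg p (fun ν => (∑ n ∈ Finset.range m, f n ν) + f m ν) := by
            simp [Finset.sum_range_succ]
        _ ≤ radAvg p (fun ν => ∑ n ∈ Finset.range m, f n ν) + radAvg p (f m) :=
            radAvg_add_le hp _ _
        _ ≤ _ := by exact add_le_add_left ih _

lemma radAvg_flip (δ : Fin N → Bool) (v : Fin N → X) :
    radAvg p (fun ν => if δ ν then v ν else -v ν) = radAvg p v := by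
  unfold radAvg
  congr 2
  have hinv : Function.Involutive (fun ε : Fin N → Bool => fun ν => (ε ν == δ ν)) := by
    intro ε; funext ν; cases hb : ε ν <;> cases hd : δ ν <;> simp [hb, hd]
  refine Fintype.sum_bijective _ hinv.bijective _ _ fun ε => ?_
  congr 1
  refine congrArg _ (Finset.sum_congr rfl fun ν _ => ?_)
  cases hb : ε ν <;> cases hd : δ ν <;> simp [hb, hd]

lemma radAvg_contraction (hp : 1 ≤ p) (v : Fin N → X) (a : Fin N → ℝ)
    (ha : ∀ ν, |a ν| ≤ 1) :
    radAvg p (fun ν => ((a ν : ℂ)) • v ν) ≤ radAvg p v := by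
  classical
  suffices h : ∀ F : Finset (Fin N), ∀ a : Fin N → ℝ, (∀ ν, |a ν| ≤ 1) →
      (∀ ν ∉ F, a ν = 1 ∨ a ν = -1) →
      radAvg p (fun ν => ((a ν : ℂ)) • v ν) ≤ radAvg p v by
    exact h Finset.univ a ha (fun ν hν => absurd (Finset.mem_univ ν) hν)
  intro F
  induction F using Finset.induction with
  | empty =>
      intro a ha hext
      refine le_of_eq ?_
      have hfun : (fun ν => ((a ν : ℂ)) • v ν)
          = fun ν => if (decide (a ν = 1)) then v ν else -v ν := by
        funext ν
        rcases hext ν (by simp) with h1 | h2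
        · simp [h1]
        · have : a ν ≠ 1 := by rw [h2]; norm_num
          simp only [h2, this]
          norm_num
      rw [hfun, radAvg_flip]
  | @insert μ F hμ ih =>
      intro a ha hext
      set t : ℝ := (1 + a μ)/2 with htdef
      have habs := abs_le.mp (ha μ)
      have ht0 : 0 ≤ t := by simp only [htdef]; linarith [habs.1]
      have ht1 : t ≤ 1 := by simp only [htdef]; linarith [habs.2]
      set ap := Function.update a μ 1 with hapdef
      set am := Function.update a μ (-1) with hamdef
      have key : (fun ν => ((a ν : ℂ)) • v ν)
          = fun ν => ((t : ℂ)) • ((ap ν : ℂ) • v ν)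
              + (((1 - t : ℝ) : ℂ)) • ((am ν : ℂ) • v ν) := by
        funext ν
        by_cases hν : ν = μ
        · subst hν
          simp only [hapdef, hamdef, Function.update_self]
          rw [smul_smul, smul_smul, ← add_smul]
          congr 1
          simp only [htdef]
          push_cast
          ring
        · simp only [hapdef, hamdef, Function.update_of_ne hν]
          rw [smul_smul, smul_smul, ← add_smul]
          congr 1
          push_cast
          ring
      rw [key]
      have h1 : ∀ ν, |ap ν| ≤ 1 := by
        intro ν
        by_cases hν : ν = μ
        · subst hν; simp [hapdef]
        · simpa [hapdef, Function.update_of_ne hν] using ha ν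
      have h2 : ∀ ν ∉ F, ap ν = 1 ∨ ap ν = -1 := by
        intro ν hν
        by_cases hνμ : ν = μ
        · subst hνμ; left; simp [hapdef]
        · rw [hapdef, Function.update_of_ne hνμ]
          exact hext ν (by simp [hνμ, hν])
      have h1' : ∀ ν, |am ν| ≤ 1 := by
        intro ν
        by_cases hν : ν = μ
        · subst hν; simp [hamdef]
        · simpa [hamdef, Function.update_of_ne hν] using ha ν
      have h2' : ∀ ν ∉ F, am ν = 1 ∨ am ν = -1 := by
        intro ν hν
        by_cases hνμ : ν = μ
        · subst hνμ; right; simp [hamdef]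
        · rw [hamdef, Function.update_of_ne hνμ]
          exact hext ν (by simp [hνμ, hν])
      calc radAvg p (fun ν => ((t:ℂ)) • ((ap ν : ℂ) • v ν)
              + (((1-t:ℝ):ℂ)) • ((am ν : ℂ) • v ν))
          ≤ radAvg p (fun ν => ((t:ℂ)) • ((ap ν : ℂ) • v ν))
            + radAvg p (fun ν => (((1-t:ℝ):ℂ)) • ((am ν : ℂ) • v ν)) :=
            radAvg_add_le hp _ _
        _ = t * radAvg p (fun ν => (ap ν : ℂ) • v ν)
            + (1-t) * radAvg p (fun ν => (am ν : ℂ) • v ν) := by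
            rw [radAvg_smul hp, radAvg_smul hp]
            rw [Complex.norm_real, Complex.norm_real, Real.norm_eq_abs,
              Real.norm_eq_abs, abs_of_nonneg ht0, abs_of_nonneg (by linarith)]
        _ ≤ t * radAvg p v + (1-t) * radAvg p v := by
            refine add_le_add (mul_le_mul_of_nonneg_left (ih ap h1 h2) ht0)
              (mul_le_mul_of_nonneg_left (ih am h1' h2') (by linarith))
        _ = radAvg p v := by ring

lemma radAvg_le_sum_norm (hp : 1 ≤ p) (v : Fin N → X) :
    radAvg p v ≤ ∑ ν, ‖v ν‖ := by
  have hp0 : (0:ℝ) < p := lt_of_lt_of_le one_pos hp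
  have hS : (0:ℝ) ≤ ∑ ν, ‖v ν‖ := Finset.sum_nonneg fun ν _ => norm_nonneg _
  have hterm : ∀ ε : Fin N → Bool,
      ‖∑ ν, (if ε ν then v ν else -v ν)‖ ^ p ≤ (∑ ν, ‖v ν‖) ^ p := by
    intro ε
    refine Real.rpow_le_rpow (norm_nonneg _) ?_ hp0.le
    refine le_trans (norm_sum_le _ _) (le_of_eq (Finset.sum_congr rfl fun ν _ => ?_))
    cases hb : ε ν <;> simp
  have hsum : ∑ ε : Fin N → Bool, ‖∑ ν, (if ε ν then v ν else -v ν)‖ ^ p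
      ≤ (2:ℝ)^N * (∑ ν, ‖v ν‖) ^ p := by
    calc _ ≤ ∑ _ε : Fin N → Bool, (∑ ν, ‖v ν‖) ^ p :=
          Finset.sum_le_sum fun ε _ => hterm ε
      _ = (2:ℝ)^N * (∑ ν, ‖v ν‖) ^ p := by
          rw [Finset.sum_const]
          simp [Fintype.card_fun]
  calc radAvg p v ≤ (((2:ℝ)^N)⁻¹ * ((2:ℝ)^N * (∑ ν, ‖v ν‖) ^ p)) ^ p⁻¹ := by
        refine Real.rpow_le_rpow (by positivity) ?_ (by positivity)
        exact mul_le_mul_of_nonneg_left hsum (by positivity)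
    _ = ∑ ν, ‖v ν‖ := by
        rw [inv_mul_cancel_left₀ (by positivity)]
        exact Real.rpow_rpow_inv hS hp0.ne'

lemma norm_single_le_radAvg (hp : 1 ≤ p) (v : Fin N → X) (μ : Fin N) :
    ‖v μ‖ ≤ ((2:ℝ)^N) ^ (p⁻¹) * radAvg p v := by
  classical
  have hp0 : (0:ℝ) < p := lt_of_lt_of_le one_pos hp
  have hone : ∀ ε : Fin N → Bool,
      ‖∑ ν, (if ε ν then v ν else -v ν)‖ ≤ ((2:ℝ)^N) ^ (p⁻¹) * radAvg p v := by
    intro ε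
    have h1 : ((2:ℝ)^N)⁻¹ * ‖∑ ν, (if ε ν then v ν else -v ν)‖ ^ p
        ≤ ((2:ℝ)^N)⁻¹ * ∑ ε' : Fin N → Bool, ‖∑ ν, (if ε' ν then v ν else -v ν)‖ ^ p := by
      refine mul_le_mul_of_nonneg_left ?_ (by positivity)
      exact Finset.single_le_sum
        (f := fun ε' : Fin N → Bool => ‖∑ ν, (if ε' ν then v ν else -v ν)‖ ^ p)
        (fun ε' _ => by positivity) (Finset.mem_univ ε)
    set G := ‖∑ ν, (if ε ν then v ν else -v ν)‖ with hG
    have h2 : (((2:ℝ)^N)⁻¹ * G ^ p) ^ p⁻¹ ≤ radAvg p v :=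
      Real.rpow_le_rpow (by positivity) h1 (by positivity)
    have h3 : (((2:ℝ)^N)⁻¹ * G ^ p) ^ p⁻¹ = (((2:ℝ)^N) ^ (p⁻¹:ℝ))⁻¹ * G := by
      rw [Real.mul_rpow (by positivity) (by positivity),
        Real.rpow_rpow_inv (norm_nonneg _) hp0.ne', ← Real.inv_rpow (by positivity)]
    rw [h3] at h2
    calc G = ((2:ℝ)^N) ^ (p⁻¹:ℝ) * ((((2:ℝ)^N) ^ (p⁻¹:ℝ))⁻¹ * G) := by
          rw [← mul_assoc, mul_inv_cancel₀ (by positivity), one_mul]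
      _ ≤ _ := mul_le_mul_of_nonneg_left h2 (by positivity)
  set ε₀ : Fin N → Bool := fun _ => true with hε₀
  set ε₁ : Fin N → Bool := Function.update ε₀ μ false with hε₁
  have hdiff : (∑ ν, (if ε₀ ν then v ν else -v ν)) - (∑ ν, (if ε₁ ν then v ν else -v ν))
      = (2:ℝ) • v μ := by
    rw [← Finset.sum_sub_distrib]
    rw [Finset.sum_eq_single μ]
    · simp [hε₀, hε₁, Function.update_self, two_smul]
    · intro ν _ hν
      simp [hε₀, hε₁, Function.update_of_ne hν]
    · simp
  have h4 : ‖(2:ℝ) • v μ‖ ≤ 2 * (((2:ℝ)^N) ^ (p⁻¹:ℝ) * radAvg p v) := by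
    rw [← hdiff]
    calc _ ≤ ‖∑ ν, (if ε₀ ν then v ν else -v ν)‖ + ‖∑ ν, (if ε₁ ν then v ν else -v ν)‖ :=
          norm_sub_le _ _
      _ ≤ _ := by
        rw [two_mul]
        exact add_le_add (hone ε₀) (hone ε₁)
  rw [norm_smul] at h4
  simp only [Real.norm_ofNat] at h4
  linarith

lemma radAvg_const_fin_one (hp : 1 ≤ p) (v : X) :
    radAvg p (fun _ : Fin 1 => v) = ‖v‖ := by
  have hp0 : (0:ℝ) < p := lt_of_lt_of_le one_pos hp
  unfold radAvg
  rw [Fintype.sum_equiv (Equiv.funUnique (Fin 1) Bool) _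
    (fun b : Bool => ‖if b then v else -v‖ ^ p) (fun ε => by simp [Fin.sum_univ_one])]
  rw [Fintype.sum_bool]
  simp only [if_true, if_false, norm_neg, Bool.false_eq_true]
  have h2 : ((2:ℝ) ^ (1:ℕ))⁻¹ * (‖v‖ ^ p + ‖v‖ ^ p) = ‖v‖ ^ p := by
    rw [pow_one]; ring
  rw [h2, Real.rpow_rpow_inv (norm_nonneg _) hp0.ne']

lemma radAvg_real_smul_le (hp : 1 ≤ p) (a : Fin N → ℝ) {ρ : ℝ} (hρ : 0 < ρ)
    (ha : ∀ ν, |a ν| ≤ ρ) (u : Fin N → X) :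
    radAvg p (fun ν => ((a ν : ℂ)) • u ν) ≤ ρ * radAvg p u := by
  have key : (fun ν => ((a ν : ℂ)) • u ν)
      = fun ν => (((a ν / ρ : ℝ) : ℂ)) • (((ρ : ℝ) : ℂ) • u ν) := by
    funext ν
    rw [smul_smul]
    have hρc : ((ρ:ℝ):ℂ) ≠ 0 := by
      exact_mod_cast Complex.ofReal_ne_zero.mpr hρ.ne'
    congr 1
    push_cast
    field_simp
  rw [key]
  calc radAvg p (fun ν => (((a ν / ρ : ℝ):ℂ)) • (((ρ:ℝ):ℂ) • u ν))
      ≤ radAvg p (fun ν => ((ρ:ℝ):ℂ) • u ν) := by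
        refine radAvg_contraction hp _ _ fun ν => ?_
        rw [abs_div, abs_of_pos hρ, div_le_one hρ]
        exact ha ν
    _ = ρ * radAvg p u := by
        rw [radAvg_smul hp, Complex.norm_real, Real.norm_eq_abs, abs_of_pos hρ]

lemma radAvg_cmul_le (hp : 1 ≤ p) (c : Fin N → ℂ) {ρ : ℝ} (hρ : 0 < ρ)
    (hc : ∀ ν, ‖c ν‖ ≤ ρ) (w : Fin N → X) :
    radAvg p (fun ν => c ν • w ν) ≤ 2 * ρ * radAvg p w := by
  have split : (fun ν => c ν • w ν)
      = fun ν => (((c ν).re : ℂ)) • w ν + (((c ν).im : ℂ)) • (Complex.I • w ν) := by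
    funext ν
    rw [smul_smul, ← add_smul]
    congr 1
    rw [Complex.re_add_im]
  rw [split]
  have h1 : radAvg p (fun ν => (((c ν).re : ℂ)) • w ν) ≤ ρ * radAvg p w := by
    refine radAvg_real_smul_le hp _ hρ (fun ν => ?_) w
    exact le_trans (Complex.abs_re_le_norm (c ν)) (hc ν)
  have h2 : radAvg p (fun ν => (((c ν).im : ℂ)) • (Complex.I • w ν))
      ≤ ρ * radAvg p w := by
    refine le_trans (radAvg_real_smul_le hp _ hρ (fun ν => ?_) _) ?_
    · exact le_trans (Complex.abs_im_le_norm (c ν)) (hc ν)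
    · rw [radAvg_smul hp, Complex.norm_I, one_mul]
  calc radAvg p (fun ν => (((c ν).re:ℂ)) • w ν + (((c ν).im:ℂ)) • (Complex.I • w ν))
      ≤ radAvg p (fun ν => (((c ν).re:ℂ)) • w ν)
        + radAvg p (fun ν => (((c ν).im:ℂ)) • (Complex.I • w ν)) := radAvg_add_le hp _ _
    _ ≤ ρ * radAvg p w + ρ * radAvg p w := add_le_add h1 h2
    _ = 2 * ρ * radAvg p w := by ring

end RadAvgAux

/-! ### The Neumann series expansion of `λ·J(Re λ)·(I + (λ − Re λ)·J(Re λ))⁻¹` -/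

lemma inverse_expansion {X : Type*} [NormedAddCommGroup X] [NormedSpace ℂ X] [CompleteSpace X]
    (J : ℝ → X →L[ℂ] X) (M η : ℝ) (hM : 0 ≤ M) (hη : 0 < η) (hr1 : η * M < 1)
    (hA_norm : ∀ s : ℝ, 0 < s → ‖(s:ℂ) • J s‖ ≤ M)
    (l : ℂ) (hre : 0 < l.re) (him : |l.im| < η * l.re) :
    ∃ f : ℕ → (X →L[ℂ] X),
      IsUnit (1 + (l - (l.re:ℂ)) • J l.re)
      ∧ l • (J l.re * Ring.inverse (1 + (l - (l.re:ℂ)) • J l.re)) = ∑' n, f n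
      ∧ Summable f
      ∧ (∀ n, ‖f n‖ ≤ ((1+η)*M) * (η*M)^n)
      ∧ (∀ n, ∃ c : ℂ, ‖c‖ ≤ (1+η)*η^n
          ∧ f n = c • (((l.re:ℂ) • J l.re)^(n+1))) := by
  set s : ℝ := l.re with hsdef
  have hs : 0 < s := hre
  have hsC : ((s:ℝ):ℂ) ≠ 0 := Complex.ofReal_ne_zero.mpr hs.ne'
  set A : X →L[ℂ] X := ((s:ℝ):ℂ) • J s with hAdef
  set B : X →L[ℂ] X := (l - ((s:ℝ):ℂ)) • J s with hBdef
  set q : ℂ := (-(l - ((s:ℝ):ℂ))) / ((s:ℝ):ℂ) with hqdef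
  have hlsub : ‖l - ((s:ℝ):ℂ)‖ = |l.im| := by
    have h1 : l - ((s:ℝ):ℂ) = (l.im:ℂ) * Complex.I := by
      simp [Complex.ext_iff, hsdef]
    rw [h1, norm_mul, Complex.norm_I, Complex.norm_real, Real.norm_eq_abs, mul_one]
  have hq : ‖q‖ < η := by
    rw [hqdef, norm_div, norm_neg, hlsub, Complex.norm_real, Real.norm_eq_abs,
      abs_of_pos hs, div_lt_iff₀ hs]
    exact him
  have hD : -B = q • A := by
    rw [hBdef, hAdef, smul_smul, div_mul_cancel₀ _ hsC, neg_smul]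
  have hAn : ‖A‖ ≤ M := hA_norm s hs
  have hDnorm : ‖-B‖ < 1 := by
    rw [hD, norm_smul q A]
    calc ‖q‖ * ‖A‖ ≤ η * M := mul_le_mul hq.le hAn (norm_nonneg _) hη.le
      _ < 1 := hr1
  have hUnit : IsUnit (1 + B) := by
    have h := isUnit_one_sub_of_norm_lt_one (x := -B) hDnorm
    rwa [sub_neg_eq_add] at h
  have hcoef : ∀ n : ℕ, ‖(l / ((s:ℝ):ℂ)) * q^n‖ ≤ (1+η) * η^n := by
    intro n
    rw [norm_mul, norm_pow]
    have hlq : ‖l / ((s:ℝ):ℂ)‖ ≤ 1 + η := by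
      rw [norm_div, Complex.norm_real, Real.norm_eq_abs, abs_of_pos hs,
        div_le_iff₀ hs]
      calc ‖l‖ ≤ |l.re| + |l.im| := Complex.norm_le_abs_re_add_abs_im l
        _ ≤ s + η * s := by
            rw [hsdef, abs_of_pos hre]
            exact add_le_add le_rfl him.le
        _ = (1 + η) * s := by ring
    have hqn : ‖q‖^n ≤ η^n := pow_le_pow_left₀ (norm_nonneg _) hq.le n
    exact mul_le_mul hlq hqn (by positivity) (by positivity)
  have hbound : ∀ n : ℕ, ‖((l / ((s:ℝ):ℂ)) * q^n) • A^(n+1)‖ ≤ ((1+η)*M) * (η*M)^n := by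
    intro n
    rw [norm_smul ((l / ((s:ℝ):ℂ)) * q^n) (A^(n+1))]
    have hAp : ‖A^(n+1)‖ ≤ M^(n+1) :=
      le_trans (norm_pow_le' A (Nat.succ_pos n)) (pow_le_pow_left₀ (norm_nonneg _) hAn _)
    calc ‖(l / ((s:ℝ):ℂ)) * q^n‖ * ‖A^(n+1)‖
        ≤ ((1+η) * η^n) * M^(n+1) :=
          mul_le_mul (hcoef n) hAp (norm_nonneg _) (by positivity)
      _ = ((1+η)*M) * (η*M)^n := by ring
  refine ⟨fun n => ((l / ((s:ℝ):ℂ)) * q^n) • A^(n+1), hUnit, ?_, ?_, hbound,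
    fun n => ⟨(l / ((s:ℝ):ℂ)) * q^n, hcoef n, rfl⟩⟩
  · have hinv : Ring.inverse (1 + B) = ∑' n : ℕ, (-B)^n := by
      have h := geom_series_eq_inverse (-B) hDnorm
      rw [sub_neg_eq_add] at h
      exact h.symm
    have hsumD : Summable (fun n : ℕ => (-B)^n) :=
      summable_geometric_of_norm_lt_one hDnorm
    have hJs : J s = (((s:ℝ):ℂ))⁻¹ • A := (inv_smul_smul₀ hsC (J s)).symm
    calc l • (J s * Ring.inverse (1 + B))
        = l • (J s * ∑' n : ℕ, (-B)^n) := by rw [hinv]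
      _ = l • ∑' n : ℕ, (J s * (-B)^n) := by
          rw [Summable.tsum_mul_left (J s) hsumD]
      _ = ∑' n : ℕ, l • (J s * (-B)^n) := by
          rw [Summable.tsum_const_smul l (hsumD.mul_left (J s))]
      _ = ∑' n : ℕ, ((l / ((s:ℝ):ℂ)) * q^n) • A^(n+1) := by
          refine tsum_congr fun n => ?_
          rw [hD, smul_pow, hJs, mul_smul_comm, smul_mul_assoc, smul_smul, smul_smul,
            ← pow_succ' A n]
          congr 1
          field_simp
  · exact Summable.of_norm_bounded
      ((summable_geometric_of_lt_one (mul_nonneg hη.le hM) hr1).mul_left ((1+η)*M))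
      hbound

/-- If `{s·J(s) : s > 0}` is R-bounded with `R_p`-bound `M` and
`(π/2)·η·M < 1`, then for all `λ` with `Re λ > 0` and `|Im λ| < η·Re λ` the operator
`I + (λ − Re λ)·J(Re λ)` is invertible, and the family
`{λ·J(Re λ)·(I + (λ − Re λ)·J(Re λ))⁻¹}` over such `λ` is R-bounded. -/
theorem stmt5 {X : Type*} [NormedAddCommGroup X] [NormedSpace ℂ X] [CompleteSpace X]
    (p : ℝ) (hp : 1 ≤ p)
    (J : ℝ → X →L[ℂ] X) (M : ℝ) (hM : 0 ≤ M)
    (hRb : IsRBoundedWith p {S | ∃ s : ℝ, 0 < s ∧ S = (s : ℂ) • J s} M)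
    (η : ℝ) (hη : 0 < η) (hsmall : Real.pi / 2 * η * M < 1) :
    (∀ l : ℂ, 0 < l.re → |l.im| < η * l.re →
        IsUnit (1 + (l - (l.re : ℂ)) • J l.re)) ∧
      IsRBounded p
        {S | ∃ l : ℂ, 0 < l.re ∧ |l.im| < η * l.re ∧
          S = l • (J l.re * Ring.inverse (1 + (l - (l.re : ℂ)) • J l.re))} := by
  classical
  have hp0 : (0:ℝ) < p := lt_of_lt_of_le one_pos hp
  have hr0 : (0:ℝ) ≤ η * M := mul_nonneg hη.le hM
  have hr1 : η * M < 1 := by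
    nlinarith [Real.two_le_pi, mul_nonneg hη.le hM]
  have h1r : (0:ℝ) < 1 - η * M := by linarith
  have hA_norm : ∀ s : ℝ, 0 < s → ‖(s:ℂ) • J s‖ ≤ M := by
    intro s hs
    refine ContinuousLinearMap.opNorm_le_bound _ hM fun y => ?_
    have h := hRb 1 (fun _ => (s:ℂ) • J s) (fun _ => ⟨s, hs, rfl⟩) (fun _ => y)
    simpa [radAvg_const_fin_one hp] using h
  constructor
  · intro l hre him
    obtain ⟨f, hu, -⟩ := inverse_expansion J M η hM hη hr1 hA_norm l hre him
    exact hu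
  · refine ⟨2*(1+η)*M * (1-(η*M))⁻¹, by positivity, ?_⟩
    intro N t ht x
    choose l hre him heq using ht
    choose f hu hexp hsummable hbound hstruct using
      fun ν => inverse_expansion J M η hM hη hr1 hA_norm (l ν) (hre ν) (him ν)
    have hteq : ∀ ν, t ν = ∑' n, f ν n := fun ν => (heq ν).trans (hexp ν)
    -- R-bound for powers of the base family
    have hpow : ∀ n : ℕ, ∀ y : Fin N → X,
        radAvg p (fun ν => ((((l ν).re:ℂ) • J (l ν).re)^n) (y ν)) ≤ M^n * radAvg p y := by
      intro n
      induction n with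
      | zero => intro y; simp
      | succ n ih =>
          intro y
          have hstep : ∀ ν, ((((l ν).re:ℂ) • J (l ν).re)^(n+1)) (y ν)
              = (((l ν).re:ℂ) • J (l ν).re) (((((l ν).re:ℂ) • J (l ν).re)^n) (y ν)) := by
            intro ν
            rw [pow_succ', ContinuousLinearMap.mul_apply]
          calc radAvg p (fun ν => ((((l ν).re:ℂ) • J (l ν).re)^(n+1)) (y ν))
              = radAvg p (fun ν => (((l ν).re:ℂ) • J (l ν).re)
                  (((((l ν).re:ℂ) • J (l ν).re)^n) (y ν))) := by
                exact congrArg _ (funext hstep)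
            _ ≤ M * radAvg p (fun ν => ((((l ν).re:ℂ) • J (l ν).re)^n) (y ν)) :=
                hRb N _ (fun ν => ⟨(l ν).re, hre ν, rfl⟩) _
            _ ≤ M * (M^n * radAvg p y) := mul_le_mul_of_nonneg_left (ih y) hM
            _ = M^(n+1) * radAvg p y := by ring
    -- per-term estimate
    have hterm : ∀ n : ℕ, radAvg p (fun ν => (f ν n) (x ν))
        ≤ (2*(1+η)*M) * (η*M)^n * radAvg p x := by
      intro n
      choose c hc hfc using fun ν => hstruct ν n
      have hx2 : (fun ν => (f ν n) (x ν))
          = fun ν => c ν • (((((l ν).re:ℂ) • J (l ν).re)^(n+1)) (x ν)) := by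
        funext ν
        rw [hfc ν, ContinuousLinearMap.smul_apply]
      rw [hx2]
      have hρ : (0:ℝ) < (1+η)*η^n := by positivity
      calc radAvg p (fun ν => c ν • (((((l ν).re:ℂ) • J (l ν).re)^(n+1)) (x ν)))
          ≤ 2*((1+η)*η^n)
              * radAvg p (fun ν => ((((l ν).re:ℂ) • J (l ν).re)^(n+1)) (x ν)) :=
            radAvg_cmul_le hp c hρ hc _
        _ ≤ 2*((1+η)*η^n) * (M^(n+1) * radAvg p x) :=
            mul_le_mul_of_nonneg_left (hpow (n+1) x) (by positivity)
        _ = (2*(1+η)*M) * (η*M)^n * radAvg p x := by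
            rw [mul_pow]
            ring
    have hgeo : ∀ m : ℕ, ∑ n ∈ Finset.range m, (η*M)^n ≤ (1-(η*M))⁻¹ := by
      intro m
      have h1 := Summable.sum_le_tsum (Finset.range m) (fun n _ => by positivity)
        (summable_geometric_of_lt_one hr0 hr1)
      rwa [tsum_geometric_of_lt_one hr0 hr1] at h1
    have hpartial : ∀ m : ℕ,
        radAvg p (fun ν => ∑ n ∈ Finset.range m, (f ν n) (x ν))
          ≤ (2*(1+η)*M * (1-(η*M))⁻¹) * radAvg p x := by
      intro m
      calc radAvg p (fun ν => ∑ n ∈ Finset.range m, (f ν n) (x ν))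
          ≤ ∑ n ∈ Finset.range m, radAvg p (fun ν => (f ν n) (x ν)) :=
            radAvg_sum_le hp (fun n ν => (f ν n) (x ν))
        _ ≤ ∑ n ∈ Finset.range m, (2*(1+η)*M) * (η*M)^n * radAvg p x :=
            Finset.sum_le_sum fun n _ => hterm n
        _ = (2*(1+η)*M) * (∑ n ∈ Finset.range m, (η*M)^n) * radAvg p x := by
            rw [← Finset.sum_mul, ← Finset.mul_sum]
        _ ≤ (2*(1+η)*M * (1-(η*M))⁻¹) * radAvg p x := by
            refine mul_le_mul_of_nonneg_right ?_ (radAvg_nonneg x)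
            exact mul_le_mul_of_nonneg_left (hgeo m) (by positivity)
    have htail : ∀ m : ℕ, ∀ ν, ‖t ν - ∑ n ∈ Finset.range m, f ν n‖
        ≤ ((1+η)*M*(1-(η*M))⁻¹) * (η*M)^m := by
      intro m ν
      have hdecomp := Summable.sum_add_tsum_nat_add (f := f ν) m (hsummable ν)
      have hdiff : t ν - ∑ n ∈ Finset.range m, f ν n = ∑' n, f ν (n + m) := by
        rw [hteq ν, ← hdecomp, add_sub_cancel_left]
      rw [hdiff]
      have hmaj : ∀ n : ℕ, ‖f ν (n+m)‖ ≤ ((1+η)*M*(η*M)^m) * (η*M)^n := by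
        intro n
        calc ‖f ν (n+m)‖ ≤ ((1+η)*M) * (η*M)^(n+m) := hbound ν (n+m)
          _ = ((1+η)*M*(η*M)^m) * (η*M)^n := by rw [pow_add]; ring
      have hsum2 : Summable (fun n : ℕ => ((1+η)*M*(η*M)^m) * (η*M)^n) :=
        (summable_geometric_of_lt_one hr0 hr1).mul_left _
      calc ‖∑' n, f ν (n+m)‖ ≤ ∑' n : ℕ, ((1+η)*M*(η*M)^m) * (η*M)^n :=
            tsum_of_norm_bounded hsum2.hasSum hmaj
        _ = ((1+η)*M*(1-(η*M))⁻¹) * (η*M)^m := by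
            rw [tsum_mul_left, tsum_geometric_of_lt_one hr0 hr1]
            ring
    have hNbound : ∑ ν, ‖x ν‖ ≤ (N:ℝ) * ((2:ℝ)^N)^(p⁻¹:ℝ) * radAvg p x := by
      calc ∑ ν, ‖x ν‖ ≤ ∑ _ν : Fin N, ((2:ℝ)^N)^(p⁻¹:ℝ) * radAvg p x :=
            Finset.sum_le_sum fun ν _ => norm_single_le_radAvg hp x ν
        _ = (N:ℝ) * (((2:ℝ)^N)^(p⁻¹:ℝ) * radAvg p x) := by
            rw [Finset.sum_const]
            simp [Finset.card_univ]
        _ = (N:ℝ) * ((2:ℝ)^N)^(p⁻¹:ℝ) * radAvg p x := by ring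
    have key : ∀ m : ℕ, radAvg p (fun ν => t ν (x ν))
        ≤ (2*(1+η)*M * (1-(η*M))⁻¹) * radAvg p x
          + (((1+η)*M*(1-(η*M))⁻¹) * ((N:ℝ) * ((2:ℝ)^N)^(p⁻¹:ℝ) * radAvg p x))
            * (η*M)^m := by
      intro m
      have hsplit : (fun ν => t ν (x ν))
          = fun ν => (∑ n ∈ Finset.range m, (f ν n) (x ν))
              + ((t ν - ∑ n ∈ Finset.range m, f ν n) (x ν)) := by
        funext ν
        rw [ContinuousLinearMap.sub_apply, ContinuousLinearMap.sum_apply]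
        abel
      rw [hsplit]
      have herr : radAvg p (fun ν => ((t ν - ∑ n ∈ Finset.range m, f ν n) (x ν)))
          ≤ (((1+η)*M*(1-(η*M))⁻¹) * ((N:ℝ)*((2:ℝ)^N)^(p⁻¹:ℝ) * radAvg p x))
            * (η*M)^m := by
        calc radAvg p (fun ν => ((t ν - ∑ n ∈ Finset.range m, f ν n) (x ν)))
            ≤ ∑ ν, ‖(t ν - ∑ n ∈ Finset.range m, f ν n) (x ν)‖ :=
              radAvg_le_sum_norm hp _
          _ ≤ ∑ ν, ((1+η)*M*(1-(η*M))⁻¹) * (η*M)^m * ‖x ν‖ := by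
              refine Finset.sum_le_sum fun ν _ => ?_
              calc ‖(t ν - ∑ n ∈ Finset.range m, f ν n) (x ν)‖
                  ≤ ‖t ν - ∑ n ∈ Finset.range m, f ν n‖ * ‖x ν‖ :=
                    ContinuousLinearMap.le_opNorm _ _
                _ ≤ ((1+η)*M*(1-(η*M))⁻¹) * (η*M)^m * ‖x ν‖ :=
                    mul_le_mul_of_nonneg_right (htail m ν) (norm_nonneg _)
          _ = ((1+η)*M*(1-(η*M))⁻¹) * (η*M)^m * ∑ ν, ‖x ν‖ := by
              rw [← Finset.mul_sum]
          _ ≤ ((1+η)*M*(1-(η*M))⁻¹) * (η*M)^m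
                * ((N:ℝ) * ((2:ℝ)^N)^(p⁻¹:ℝ) * radAvg p x) :=
              mul_le_mul_of_nonneg_left hNbound (by positivity)
          _ = (((1+η)*M*(1-(η*M))⁻¹) * ((N:ℝ)*((2:ℝ)^N)^(p⁻¹:ℝ) * radAvg p x))
                * (η*M)^m := by ring
      calc radAvg p (fun ν => (∑ n ∈ Finset.range m, (f ν n) (x ν))
              + ((t ν - ∑ n ∈ Finset.range m, f ν n) (x ν)))
          ≤ radAvg p (fun ν => ∑ n ∈ Finset.range m, (f ν n) (x ν))
            + radAvg p (fun ν => ((t ν - ∑ n ∈ Finset.range m, f ν n) (x ν))) :=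
            radAvg_add_le hp _ _
        _ ≤ _ := add_le_add (hpartial m) herr
    have hlim : Filter.Tendsto
        (fun m : ℕ => (2*(1+η)*M * (1-(η*M))⁻¹) * radAvg p x
          + (((1+η)*M*(1-(η*M))⁻¹) * ((N:ℝ) * ((2:ℝ)^N)^(p⁻¹:ℝ) * radAvg p x))
            * (η*M)^m)
        Filter.atTop
        (nhds ((2*(1+η)*M * (1-(η*M))⁻¹) * radAvg p x)) := by
      have h0 : Filter.Tendsto (fun m : ℕ => (η*M)^m) Filter.atTop (nhds 0) :=
        tendsto_pow_atTop_nhds_zero_of_lt_one hr0 hr1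
      have h1 := (h0.const_mul (((1+η)*M*(1-(η*M))⁻¹)
          * ((N:ℝ) * ((2:ℝ)^N)^(p⁻¹:ℝ) * radAvg p x))).const_add
        ((2*(1+η)*M * (1-(η*M))⁻¹) * radAvg p x)
      simpa [mul_comm] using h1
    exact ge_of_tendsto' hlim key

end
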